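/- Let α > 1 be irrational with convergent numerators p_n and partial quotients a_n, and S_α the avoided set of the partition {A_α, B_α}. Then 2p_n ∈ S_α if and only if p_n is odd and either (i) p_{n+1} is odd and a_{n+1} ≥ 3, or (ii) p_{n+1} is even and a_{n+1} ≥ 2, or (iii) p_n = 1. -/

import Mathlib

/-!
Write `β = 1 / α` and `‖t‖` for the distance from `t` to the nearest integer. Since
`E α m = α (mβ - round (mβ))`, two positive integers `P - j` and `P + j` lie in the same part
exactly when the rounding errors of `(P - j)β` and `(P + j)β` have the same sign, which happens
exactly when `‖2jβ‖ < ‖2Pβ‖`. So `2P ∉ S_α` iff some `0 < j < P` has `‖2jβ‖ < ‖2Pβ‖`.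

For `P = p_n`, with `ε_k = |p_k β - q_k|`, the identity `p_{n+1} ε_n + p_n ε_{n+1} = 1` gives
`ε_n + ε_{n+1} < ‖2p_nβ‖ ≤ 2ε_n` once `p_n ≥ 2`. Writing
`(x, y) = u (p_n, q_n) + v (p_{n+1}, q_{n+1})`, the alternating signs of `p_k β - q_k` show that
the only `0 < x < 2p_n` with `|xβ - y| < 2ε_n` are `p_n`, `p_{n+1}`, `p_{n+1} - p_n` and
`2p_{n+1} - p_n`, the first three within `ε_n + ε_{n+1}`. The theorem is the bookkeeping of which
of these is even and below `2p_n`.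
-/

/-- `E α n` is the error `n - qα` where `qα` is the integer multiple of `α`
nearest to `n` (for `α > 1`, this multiple is `round (n/α) * α`). -/
noncomputable def E (α : ℝ) (n : ℕ) : ℝ := (n : ℝ) - round ((n : ℝ) / α) * α

/-- `A_α`: positive integers whose nearest multiple of `α` exceeds them. -/
def Aset (α : ℝ) : Set ℕ := {n | 0 < n ∧ E α n < 0}

/-- `B_α`: positive integers whose nearest multiple of `α` is below them. -/
def Bset (α : ℝ) : Set ℕ := {n | 0 < n ∧ 0 < E α n}

/-- `S_α`: positive integers not expressible as a sum of two distinct elements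
of `A_α` nor of two distinct elements of `B_α`. -/
def Sset (α : ℝ) : Set ℕ :=
  {s | 0 < s ∧ (∀ x ∈ Aset α, ∀ y ∈ Aset α, x ≠ y → x + y ≠ s) ∧
       (∀ x ∈ Bset α, ∀ y ∈ Bset α, x ≠ y → x + y ≠ s)}
/-- Data of the continued fraction expansion `α = [a 0; a 1, a 2, ...]` of an
irrational `α > 1`, with `t n` the successive complete quotients, and
`p n / q n` the convergents. -/
structure CF (α : ℝ) where
  a : ℕ → ℕ
  t : ℕ → ℝ
  p : ℕ → ℕ
  q : ℕ → ℕ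
  t0 : t 0 = α
  ha : ∀ n, 1 ≤ a n
  floor_t : ∀ n, (a n : ℝ) = ⌊t n⌋
  t_rec : ∀ n, t n = a n + 1 / t (n + 1)
  p0 : p 0 = a 0
  p1 : p 1 = a 1 * a 0 + 1
  p_rec : ∀ n, p (n + 2) = a (n + 2) * p (n + 1) + p n
  q0 : q 0 = 1
  q1 : q 1 = a 1
  q_rec : ∀ n, q (n + 2) = a (n + 2) * q (n + 1) + q n

/-- The numerators extended by two initial terms: `P 0 = p_{-2} = 0`,
`P 1 = p_{-1} = 1`, and `P (n+2) = p n`. -/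
def CF.P {α : ℝ} (c : CF α) : ℕ → ℕ
  | 0 => 0
  | 1 => 1
  | n + 2 => c.p n

lemma abs_add_le_abs_sub_sub_int {d₁ d₂ : ℝ} (h₁ : |d₁| ≤ 1 / 2) (h₂ : |d₂| ≤ 1 / 2)
    (h : d₁ * d₂ ≤ 0) (y : ℤ) : |d₁ + d₂| ≤ |d₂ - d₁ - y| := by
  rw [abs_le] at h₁ h₂
  rcases lt_trichotomy y 0 with hy | rfl | hy
  · have hy' : (y : ℝ) ≤ -1 := by exact_mod_cast Int.le_sub_one_iff.mpr hy
    rw [abs_of_nonneg (by linarith : (0 : ℝ) ≤ d₂ - d₁ - y), abs_le]; constructor <;> linarith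
  · rw [Int.cast_zero, sub_zero, ← sq_le_sq]; nlinarith
  · have hy' : (1 : ℝ) ≤ y := by exact_mod_cast hy
    rw [abs_of_nonpos (by linarith : d₂ - d₁ - y ≤ 0), abs_le]; constructor <;> linarith

lemma abs_sub_lt_abs_add_sub_int {d₁ d₂ : ℝ} (h₁ : |d₁| < 1 / 2) (h₂ : |d₂| < 1 / 2)
    (h : 0 < d₁ * d₂) (z : ℤ) : |d₂ - d₁| < |d₁ + d₂ - z| := by
  rw [abs_lt] at h₁ h₂
  rcases lt_trichotomy z 0 with hz | rfl | hz
  · have hz' : (z : ℝ) ≤ -1 := by exact_mod_cast Int.le_sub_one_iff.mpr hz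
    rw [abs_of_pos (by linarith : (0 : ℝ) < d₁ + d₂ - z), abs_lt]; constructor <;> linarith
  · rw [Int.cast_zero, sub_zero, ← sq_lt_sq]; nlinarith
  · have hz' : (1 : ℝ) ≤ z := by exact_mod_cast hz
    rw [abs_of_neg (by linarith : d₁ + d₂ - z < 0), abs_lt]; constructor <;> linarith

lemma mul_pos_iff_exists_abs_sub_lt {d₁ d₂ : ℝ} (h₁ : |d₁| < 1 / 2) (h₂ : |d₂| < 1 / 2) :
    0 < d₁ * d₂ ↔ ∃ y : ℤ, ∀ z : ℤ, |d₂ - d₁ - y| < |d₁ + d₂ - z| := by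
  refine ⟨fun h => ⟨0, fun z => by simpa using abs_sub_lt_abs_add_sub_int h₁ h₂ h z⟩, ?_⟩
  rintro ⟨y, hy⟩
  by_contra! h
  have := abs_add_le_abs_sub_sub_int h₁.le h₂.le h y
  have := hy 0
  simp only [Int.cast_zero, sub_zero] at this
  linarith

lemma sub_round_mul_pos_iff {t₁ t₂ : ℝ} (h₁ : |t₁ - round t₁| < 1 / 2)
    (h₂ : |t₂ - round t₂| < 1 / 2) :
    0 < (t₁ - round t₁) * (t₂ - round t₂) ↔
      ∃ y : ℤ, ∀ z : ℤ, |t₂ - t₁ - y| < |t₁ + t₂ - z| := by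
  rw [mul_pos_iff_exists_abs_sub_lt h₁ h₂]
  constructor
  · rintro ⟨y, hy⟩
    refine ⟨y + round t₂ - round t₁, fun z => ?_⟩
    convert hy (z - round t₁ - round t₂) using 2 <;> push_cast <;> ring_nf
  · rintro ⟨y, hy⟩
    refine ⟨y - round t₂ + round t₁, fun z => ?_⟩
    convert hy (z + round t₁ + round t₂) using 2 <;> push_cast <;> ring_nf

lemma Irrational.abs_sub_round_lt_half {t : ℝ} (ht : Irrational t) : |t - round t| < 1 / 2 := by
  refine (abs_sub_round t).lt_of_ne fun h => ?_
  rcases (abs_eq (by norm_num)).mp h with h | h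
  · exact (ht.sub_intCast (round t)).ne_rat (1 / 2) (by rw [h]; norm_num)
  · exact (ht.sub_intCast (round t)).ne_rat (-1 / 2) (by rw [h]; norm_num)

lemma E_eq_mul_sub_round {α : ℝ} (hα : α ≠ 0) (m : ℕ) :
    E α m = α * (m / α - round (m / α)) := by
  rw [E, mul_sub, mul_div_cancel₀ _ hα, mul_comm]

lemma E_mul_E_pos_iff {α : ℝ} (hirr : Irrational α) {m₁ m₂ : ℕ} (h₁ : m₁ ≠ 0) (h₂ : m₂ ≠ 0) :
    0 < E α m₁ * E α m₂ ↔ ∃ y : ℤ, ∀ z : ℤ, |m₂ / α - m₁ / α - y| < |m₁ / α + m₂ / α - z| := by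
  have hα := hirr.ne_zero
  rw [E_eq_mul_sub_round hα, E_eq_mul_sub_round hα, mul_mul_mul_comm,
    mul_pos_iff_of_pos_left (mul_self_pos.mpr hα)]
  exact sub_round_mul_pos_iff (hirr.natCast_div h₁).abs_sub_round_lt_half
    (hirr.natCast_div h₂).abs_sub_round_lt_half

lemma notMem_Sset_iff {α : ℝ} {s : ℕ} (hs : 0 < s) :
    s ∉ Sset α ↔ ∃ m₁ m₂ : ℕ, 0 < m₁ ∧ m₁ < m₂ ∧ m₁ + m₂ = s ∧ 0 < E α m₁ * E α m₂ := by
  have ordered : ∀ x y : ℕ, 0 < x → 0 < y → x ≠ y → x + y = s → 0 < E α x * E α y →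
      ∃ m₁ m₂ : ℕ, 0 < m₁ ∧ m₁ < m₂ ∧ m₁ + m₂ = s ∧ 0 < E α m₁ * E α m₂ := by
    intro x y hx hy hxy hsum hE
    rcases hxy.lt_or_gt with h | h
    · exact ⟨x, y, hx, h, hsum, hE⟩
    · exact ⟨y, x, hy, h, by omega, by rwa [mul_comm]⟩
  simp only [Sset, Aset, Bset, Set.mem_ofPred_eq, hs, true_and, not_and_or, not_forall]
  constructor
  · rintro (⟨x, ⟨hx, hEx⟩, y, ⟨hy, hEy⟩, hxy, hsum⟩ | ⟨x, ⟨hx, hEx⟩, y, ⟨hy, hEy⟩, hxy, hsum⟩) <;>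
      refine ordered x y hx hy hxy (not_not.mp hsum) ?_
    · exact mul_pos_of_neg_of_neg hEx hEy
    · exact mul_pos hEx hEy
  · rintro ⟨m₁, m₂, h₁, h₁₂, hsum, hE⟩
    rcases mul_pos_iff.mp hE with ⟨hE₁, hE₂⟩ | ⟨hE₁, hE₂⟩
    · exact Or.inr ⟨m₁, ⟨h₁, hE₁⟩, m₂, ⟨h₁.trans h₁₂, hE₂⟩, h₁₂.ne, not_not.mpr hsum⟩
    · exact Or.inl ⟨m₁, ⟨h₁, hE₁⟩, m₂, ⟨h₁.trans h₁₂, hE₂⟩, h₁₂.ne, not_not.mpr hsum⟩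

theorem two_mul_notMem_Sset_iff {α : ℝ} (hirr : Irrational α) {P : ℕ} (hP : 0 < P) :
    2 * P ∉ Sset α ↔
      ∃ j : ℕ, 0 < j ∧ j < P ∧ ∃ y : ℤ, ∀ z : ℤ, |2 * j / α - y| < |2 * P / α - z| := by
  rw [notMem_Sset_iff (by omega)]
  constructor
  · rintro ⟨m₁, m₂, h₁, h₁₂, hsum, hE⟩
    obtain ⟨y, hy⟩ := (E_mul_E_pos_iff hirr h₁.ne' (by omega)).mp hE
    obtain ⟨j, rfl, rfl⟩ : ∃ j, m₁ = P - j ∧ m₂ = P + j := ⟨m₂ - P, by omega, by omega⟩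
    refine ⟨j, by omega, by omega, y, fun z => ?_⟩
    convert hy z using 3 <;> rw [Nat.cast_sub (by omega)] <;> push_cast <;> ring
  · rintro ⟨j, hj, hjP, y, hy⟩
    refine ⟨P - j, P + j, by omega, by omega, by omega, ?_⟩
    rw [E_mul_E_pos_iff hirr (by omega) (by omega)]
    refine ⟨y, fun z => ?_⟩
    convert hy z using 3 <;> rw [Nat.cast_sub hjP.le] <;> push_cast <;> ring

lemma abs_mul_add_mul_of_mul_neg {e e' : ℝ} (h : e * e' < 0) (u v : ℝ) :
    |u * e + v * e'| = |(u * |e| - v * |e'|)| := by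
  rcases mul_neg_iff.mp h with ⟨he, he'⟩ | ⟨he, he'⟩
  · rw [abs_of_pos he, abs_of_neg he']; ring_nf
  · rw [abs_of_neg he, abs_of_pos he', ← abs_neg]; ring_nf

lemma bounds_of_abs_sub_lt_two_mul {ε ε' : ℝ} (hε : 0 ≤ ε) (hε' : 0 ≤ ε') {u v : ℤ}
    (h : |u * ε - v * ε'| < 2 * ε) : (v ≤ 0 → u ≤ 1) ∧ (0 ≤ v → -1 ≤ u) := by
  rw [abs_lt] at h
  constructor
  · intro hv
    by_contra! hu
    have hu : (2 : ℝ) ≤ u := by exact_mod_cast hu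
    have hv : (v : ℝ) ≤ 0 := by exact_mod_cast hv
    nlinarith
  · intro hv
    by_contra! hu
    have hu : (u : ℝ) ≤ -2 := by exact_mod_cast Int.le_sub_one_iff.mpr hu
    have hv : (0 : ℝ) ≤ v := by exact_mod_cast hv
    nlinarith

lemma lattice_cases {P P' u v : ℤ} (hPP' : P ≤ P')
    (h₀ : 0 < u * P + v * P') (h₂ : u * P + v * P' < 2 * P)
    (hu₁ : v ≤ 0 → u ≤ 1) (hu₂ : 0 ≤ v → -1 ≤ u) :
    (u = 1 ∧ v = 0) ∨ (u = 0 ∧ v = 1) ∨ (u = -1 ∧ v = 1) ∨ (u = -1 ∧ v = 2) := by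
  have hv₀ : 0 ≤ v := by
    by_contra! hv
    nlinarith [hu₁ hv.le]
  have hu₀ : u ≤ 1 := by
    rcases hv₀.eq_or_lt with rfl | hv
    · exact hu₁ le_rfl
    · by_contra! hu
      nlinarith
  have hv₂ : v ≤ 2 := by
    by_contra! hv
    nlinarith [hu₂ hv₀]
  have hu₁' := hu₂ hv₀
  interval_cases u <;> interval_cases v <;> omega

namespace CF

variable {α : ℝ} (c : CF α)

def Q : ℕ → ℕ
  | 0 => 1
  | 1 => 0
  | n + 2 => c.q n

lemma P_add_two (k : ℕ) : c.P (k + 2) = c.a k * c.P (k + 1) + c.P k := by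
  match k with
  | 0 => simp [P, c.p0]
  | 1 => simp [P, c.p1, c.p0]
  | n + 2 => exact c.p_rec n

lemma Q_add_two (k : ℕ) : c.Q (k + 2) = c.a k * c.Q (k + 1) + c.Q k := by
  match k with
  | 0 => simp [Q, c.q0]
  | 1 => simp [Q, c.q1, c.q0]
  | n + 2 => exact c.q_rec n

lemma P_succ_pos (k : ℕ) : 0 < c.P (k + 1) := by
  induction k with
  | zero => exact Nat.one_pos
  | succ k ih =>
    rw [c.P_add_two]
    exact Nat.add_pos_left (Nat.mul_pos (c.ha k) ih) _

lemma P_le_succ (k : ℕ) : c.P k ≤ c.P (k + 1) := by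
  match k with
  | 0 => exact Nat.zero_le _
  | k + 1 =>
    rw [c.P_add_two]
    exact le_add_right (Nat.le_mul_of_pos_left _ (c.ha k))

lemma P_lt_succ_of_two_le {k : ℕ} (h : 2 ≤ c.P (k + 1)) : c.P k < c.P (k + 1) := by
  match k with
  | 0 => exact c.P_succ_pos 0
  | 1 => exact h
  | k + 2 =>
    calc c.P (k + 2) < c.a (k + 1) * c.P (k + 2) + c.P (k + 1) :=
          lt_add_of_le_of_pos (Nat.le_mul_of_pos_left _ (c.ha (k + 1))) (c.P_succ_pos k)
      _ = c.P (k + 3) := (c.P_add_two (k + 1)).symm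

lemma det (k : ℕ) : (c.P k * c.Q (k + 1) - c.P (k + 1) * c.Q k : ℤ) = (-1) ^ (k + 1) := by
  induction k with
  | zero => simp [P, Q]
  | succ k ih =>
    rw [c.P_add_two, c.Q_add_two, pow_succ, ← ih]
    push_cast
    ring

lemma one_le_a (k : ℕ) : (1 : ℝ) ≤ c.a k := by exact_mod_cast c.ha k

lemma a_le_t (k : ℕ) : (c.a k : ℝ) ≤ c.t k := by
  rw [c.floor_t]; exact Int.floor_le _

lemma one_lt_t (k : ℕ) : 1 < c.t k := by
  have : 0 < 1 / c.t (k + 1) := one_div_pos.mpr (by linarith [c.one_le_a (k + 1), c.a_le_t (k + 1)])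
  linarith [c.t_rec k, c.one_le_a k]

lemma t_pos (k : ℕ) : 0 < c.t k := one_pos.trans (c.one_lt_t k)

noncomputable def err (k : ℕ) : ℝ := c.P k / α - c.Q k

lemma err_add_two (k : ℕ) : c.err (k + 2) = c.a k * c.err (k + 1) + c.err k := by
  simp only [err, c.P_add_two, c.Q_add_two]
  push_cast
  ring

lemma err_eq_neg_t_mul (k : ℕ) : c.err k = -c.t k * c.err (k + 1) := by
  induction k with
  | zero =>
    have : α ≠ 0 := c.t0 ▸ (c.t_pos 0).ne'
    simp [err, P, Q, c.t0, this]
  | succ k ih =>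
    have ht := (c.t_pos (k + 1)).ne'
    rw [c.err_add_two, ih, c.t_rec k]
    field_simp
    ring

lemma err_ne_zero (k : ℕ) : c.err k ≠ 0 := by
  induction k with
  | zero => simp [err, P, Q]
  | succ k ih =>
    intro h
    exact ih (by rw [c.err_eq_neg_t_mul, h, mul_zero])

lemma err_mul_err_succ_neg (k : ℕ) : c.err k * c.err (k + 1) < 0 := by
  rw [c.err_eq_neg_t_mul k]
  nlinarith [mul_pos (c.t_pos k) (mul_self_pos.mpr (c.err_ne_zero (k + 1)))]

lemma abs_err_succ_lt (k : ℕ) : |c.err (k + 1)| < |c.err k| := by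
  rw [c.err_eq_neg_t_mul k, abs_mul, abs_neg, abs_of_pos (c.t_pos k)]
  exact lt_mul_left (abs_pos.mpr (c.err_ne_zero _)) (c.one_lt_t k)

lemma P_succ_mul_abs_err_add (k : ℕ) :
    c.P (k + 1) * |c.err k| + c.P k * |c.err (k + 1)| = 1 := by
  have h : c.P (k + 1) * c.err k + (-c.P k) * c.err (k + 1) = (-1) ^ (k + 1) := by
    have hdet : (c.P k * c.Q (k + 1) - c.P (k + 1) * c.Q k : ℝ) = (-1) ^ (k + 1) := by
      exact_mod_cast c.det k
    rw [← hdet]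
    simp only [err]
    ring
  have := abs_mul_add_mul_of_mul_neg (c.err_mul_err_succ_neg k) (c.P (k + 1)) (-c.P k)
  rw [h, abs_pow, abs_neg, abs_one, one_pow, neg_mul, sub_neg_eq_add,
    abs_of_nonneg (by positivity)] at this
  exact this.symm

lemma exists_lattice_coords (k : ℕ) (x y : ℤ) : ∃ u v : ℤ,
    x = u * c.P k + v * c.P (k + 1) ∧ x / α - y = u * c.err k + v * c.err (k + 1) := by
  set d : ℤ := (-1) ^ (k + 1)
  have hd : d * d = 1 := by rw [← mul_pow]; norm_num
  have hdet := c.det k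
  obtain ⟨u, v, hx, hy⟩ : ∃ u v : ℤ,
      x = u * c.P k + v * c.P (k + 1) ∧ y = u * c.Q k + v * c.Q (k + 1) :=
    ⟨d * (x * c.Q (k + 1) - y * c.P (k + 1)), d * (y * c.P k - x * c.Q k),
      by linear_combination (-d * x) * hdet - x * hd,
      by linear_combination (-d * y) * hdet - y * hd⟩
  refine ⟨u, v, hx, ?_⟩
  rw [hx, hy]
  simp only [err]
  push_cast
  ring

lemma eq_of_abs_sub_lt_two_mul_abs_err (k : ℕ) {x y : ℤ} (hx₀ : 0 < x) (hx : x < 2 * c.P k)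
    (h : |x / α - y| < 2 * |c.err k|) :
    x = c.P k ∨ x = c.P (k + 1) ∨ x = c.P (k + 1) - c.P k ∨ x = 2 * c.P (k + 1) - c.P k := by
  obtain ⟨u, v, rfl, hxy⟩ := c.exists_lattice_coords k x y
  rw [hxy, abs_mul_add_mul_of_mul_neg (c.err_mul_err_succ_neg k)] at h
  obtain ⟨hu₁, hu₂⟩ := bounds_of_abs_sub_lt_two_mul (abs_nonneg _) (abs_nonneg _) h
  rcases lattice_cases (by exact_mod_cast c.P_le_succ k) hx₀ hx hu₁ hu₂ with
    ⟨rfl, rfl⟩ | ⟨rfl, rfl⟩ | ⟨rfl, rfl⟩ | ⟨rfl, rfl⟩ <;> omega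

lemma abs_two_mul_P_div_sub (k : ℕ) : |2 * c.P k / α - 2 * c.Q k| = 2 * |c.err k| := by
  rw [← abs_two, ← abs_mul, err]
  ring_nf

lemma abs_err_add_abs_err_lt {k : ℕ} (h : 2 ≤ c.P (k + 2)) (z : ℤ) :
    |c.err (k + 2)| + |c.err (k + 3)| < |2 * c.P (k + 2) / α - z| := by
  have hsum := c.P_succ_mul_abs_err_add (k + 2)
  have hP₃ : (3 : ℝ) ≤ c.P (k + 3) := by
    have := Nat.le_mul_of_pos_left (c.P (k + 2)) (c.ha (k + 1))
    have : c.P (k + 3) = c.a (k + 1) * c.P (k + 2) + c.P (k + 1) := c.P_add_two (k + 1)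
    have := c.P_succ_pos k
    exact_mod_cast (show 3 ≤ c.P (k + 3) by omega)
  have hP₂ : (2 : ℝ) ≤ c.P (k + 2) := by exact_mod_cast h
  have hε' := abs_pos.mpr (c.err_ne_zero (k + 3))
  have hε := c.abs_err_succ_lt (k + 2)
  have hle : 3 * |c.err (k + 2)| + 2 * |c.err (k + 3)| ≤ 1 := by nlinarith
  set w : ℤ := 2 * c.Q (k + 2) - z with hw
  have e : 2 * c.P (k + 2) / α - z = 2 * c.err (k + 2) + w := by
    rw [hw, err]; push_cast; ring
  rw [e]
  rcases eq_or_ne w 0 with hw₀ | hw₀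
  · rw [hw₀, Int.cast_zero, add_zero, abs_mul, abs_two]
    linarith
  · have h₁ : (1 : ℝ) ≤ |(w : ℝ)| := by exact_mod_cast Int.one_le_abs hw₀
    have h₂ := abs_add' (w : ℝ) (2 * c.err (k + 2))
    rw [abs_mul, abs_two] at h₂
    linarith

lemma exists_abs_sub_le (k j : ℕ)
    (hj : 2 * j = c.P k ∨ 2 * j = c.P (k + 1) ∨ 2 * j + c.P k = c.P (k + 1)) :
    ∃ y : ℤ, |2 * j / α - y| ≤ |c.err k| + |c.err (k + 1)| := by
  rcases hj with hj | hj | hj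
  · refine ⟨c.Q k, le_of_eq_of_le ?_ (le_add_of_nonneg_right (abs_nonneg _))⟩
    rw [err, ← hj]; push_cast; rfl
  · refine ⟨c.Q (k + 1), le_of_eq_of_le ?_ (le_add_of_nonneg_left (abs_nonneg _))⟩
    rw [err, ← hj]; push_cast; rfl
  · refine ⟨c.Q (k + 1) - c.Q k, le_of_eq_of_le ?_ ((abs_sub _ _).trans_eq (add_comm _ _))⟩
    rw [err, err, ← hj]; push_cast; ring_nf

end CF

def TwoMulCriterion (p p' a : ℕ) : Prop :=
  Odd p ∧ ((Odd p' ∧ 3 ≤ a) ∨ (Even p' ∧ 2 ≤ a) ∨ p = 1)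

lemma two_mul_ne_of_twoMulCriterion {p p' a j : ℕ} (hp' : a * p ≤ p') (hc : TwoMulCriterion p p' a)
    (hj : 0 < j) (hjp : j < p) :
    2 * j ≠ p ∧ 2 * j ≠ p' ∧ 2 * j + p ≠ p' ∧ 2 * j + p ≠ 2 * p' := by
  obtain ⟨hp, ⟨hp'₁, ha⟩ | ⟨hp'₁, ha⟩ | rfl⟩ := hc
  · have := Nat.mul_le_mul_right p ha
    rw [Nat.odd_iff] at hp hp'₁
    omega
  · have := Nat.mul_le_mul_right p ha
    rw [Nat.odd_iff] at hp
    rw [Nat.even_iff] at hp'₁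
    omega
  · omega

lemma exists_two_mul_eq_of_not_twoMulCriterion {p₀ p p' a : ℕ} (hp' : p' = a * p + p₀) (ha : 1 ≤ a)
    (hp₀ : 0 < p₀) (hp₀p : 2 ≤ p → p₀ < p) (hp : 0 < p) (hc : ¬TwoMulCriterion p p' a) :
    ∃ j, 0 < j ∧ j < p ∧ (2 * j = p ∨ 2 * j = p' ∨ 2 * j + p = p') := by
  simp only [TwoMulCriterion, not_and, not_or] at hc
  rcases Nat.even_or_odd p with ⟨i, hi⟩ | hodd
  · exact ⟨i, by omega, by omega, by omega⟩
  have ⟨hc₁, hc₂, hc₃⟩ := hc hodd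
  have := Nat.le_mul_of_pos_left p ha
  rw [Nat.odd_iff] at hodd
  rcases Nat.even_or_odd p' with ⟨i, hi⟩ | hodd'
  · have ha₁ : a = 1 := by have := hc₂ ⟨i, hi⟩; omega
    subst ha₁
    exact ⟨i, by omega, by omega, by omega⟩
  · have ha₂ : a ≤ 2 := by have := hc₁ hodd'; omega
    have := Nat.mul_le_mul_right p ha₂
    rw [Nat.odd_iff] at hodd'
    exact ⟨(p' - p) / 2, by omega, by omega, by omega⟩

theorem stmt10_general (α : ℝ) (hirr : Irrational α) (c : CF α) (n : ℕ) :
    2 * c.p n ∈ Sset α ↔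
      Odd (c.p n) ∧
        ((Odd (c.p (n + 1)) ∧ 3 ≤ c.a (n + 1)) ∨
         (Even (c.p (n + 1)) ∧ 2 ≤ c.a (n + 1)) ∨
         c.p n = 1) := by
  have hrec : c.P (n + 3) = c.a (n + 1) * c.P (n + 2) + c.P (n + 1) := c.P_add_two (n + 1)
  rw [show c.p n = c.P (n + 2) from rfl, show c.p (n + 1) = c.P (n + 3) from rfl, ← not_iff_not,
    two_mul_notMem_Sset_iff (P := c.P (n + 2)) hirr (c.P_succ_pos (n + 1))]
  change _ ↔ ¬TwoMulCriterion _ _ _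
  constructor
  · rintro ⟨j, hj, hjp, y, hy⟩ hc
    have hxy : |((2 * j : ℤ) : ℝ) / α - y| < 2 * |c.err (n + 2)| := by
      have := hy (2 * c.Q (n + 2))
      push_cast at this ⊢
      rwa [c.abs_two_mul_P_div_sub] at this
    have hx := c.eq_of_abs_sub_lt_two_mul_abs_err (n + 2) (by omega) (by omega) hxy
    rw [show n + 2 + 1 = n + 3 from rfl] at hx
    have := two_mul_ne_of_twoMulCriterion (hrec ▸ Nat.le_add_right _ _) hc hj hjp
    omega
  · intro hc
    obtain ⟨j, hj, hjp, hj'⟩ := exists_two_mul_eq_of_not_twoMulCriterion hrec (c.ha (n + 1))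
      (c.P_succ_pos n) c.P_lt_succ_of_two_le (c.P_succ_pos (n + 1)) hc
    obtain ⟨y, hy⟩ := c.exists_abs_sub_le (n + 2) j hj'
    exact ⟨j, hj, hjp, y, fun z => hy.trans_lt (c.abs_err_add_abs_err_lt (by omega) z)⟩

/-- `2 * p_n ∈ S_α` iff `p_n` is odd and either (i) `p_{n+1}` is odd and
`a_{n+1} ≥ 3`, or (ii) `p_{n+1}` is even and `a_{n+1} ≥ 2`, or (iii) `p_n = 1`. -/
theorem stmt10 (α : ℝ) (hα : 1 < α) (hirr : Irrational α) (c : CF α) (n : ℕ) :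
    2 * c.p n ∈ Sset α ↔
      Odd (c.p n) ∧
        ((Odd (c.p (n + 1)) ∧ 3 ≤ c.a (n + 1)) ∨
         (Even (c.p (n + 1)) ∧ 2 ≤ c.a (n + 1)) ∨
         c.p n = 1) :=
  stmt10_general α hirr c n
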